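/- For all integers j, k ≥ 2, there exist g, h ∈ Lie(ℱ) such that (tr A^j)² agrees with g and (tr B^k)² agrees with h at every point of Ŝ_n. -/

import Mathlib

open MvPolynomial Matrix

/-- Polynomial functions on `M_n(ℂ) × M_n(ℂ)`, represented as polynomials in the
entries of the two matrices. -/
abbrev PolyFun (n : ℕ) := MvPolynomial ((Fin n × Fin n) ⊕ (Fin n × Fin n)) ℂ

/-- The matrix of coordinate functions `X_{jk}`. -/
noncomputable def Xmat (n : ℕ) : Matrix (Fin n) (Fin n) (PolyFun n) :=
  fun i j => MvPolynomial.X (Sum.inl (i, j))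

/-- The matrix of coordinate functions `Y_{jk}`. -/
noncomputable def Ymat (n : ℕ) : Matrix (Fin n) (Fin n) (PolyFun n) :=
  fun i j => MvPolynomial.X (Sum.inr (i, j))

/-- Traceless part `A = X - (tr X / n) I_n`. -/
noncomputable def Amat (n : ℕ) : Matrix (Fin n) (Fin n) (PolyFun n) :=
  Xmat n - (MvPolynomial.C ((n : ℂ)⁻¹) * Matrix.trace (Xmat n)) • (1 : Matrix (Fin n) (Fin n) (PolyFun n))

/-- Traceless part `B = Y - (tr Y / n) I_n`. -/
noncomputable def Bmat (n : ℕ) : Matrix (Fin n) (Fin n) (PolyFun n) :=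
  Ymat n - (MvPolynomial.C ((n : ℂ)⁻¹) * Matrix.trace (Ymat n)) • (1 : Matrix (Fin n) (Fin n) (PolyFun n))

/-- The polynomial function `(X,Y) ↦ tr (A^p B^q)`. -/
noncomputable def trAB (n p q : ℕ) : PolyFun n :=
  Matrix.trace (Amat n ^ p * Bmat n ^ q)

/-- The polynomial function `(X,Y) ↦ tr (X^a Y^b)`. -/
noncomputable def trXY (n a b : ℕ) : PolyFun n :=
  Matrix.trace (Xmat n ^ a * Ymat n ^ b)

/-- The Poisson bracket
`{F,G} = Σ_{j,k} ∂F/∂X_{jk} ∂G/∂Y_{kj} − ∂F/∂Y_{jk} ∂G/∂X_{kj}`. -/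
noncomputable def pbracket {n : ℕ} (F G : PolyFun n) : PolyFun n :=
  ∑ j : Fin n, ∑ k : Fin n,
    (MvPolynomial.pderiv (Sum.inl (j, k)) F * MvPolynomial.pderiv (Sum.inr (k, j)) G
      - MvPolynomial.pderiv (Sum.inr (j, k)) F * MvPolynomial.pderiv (Sum.inl (k, j)) G)

/-- Evaluation of a polynomial function at a pair of matrices. -/
noncomputable def evalP {n : ℕ} (X Y : Matrix (Fin n) (Fin n) ℂ) (F : PolyFun n) : ℂ :=
  MvPolynomial.eval (Sum.elim (fun p => X p.1 p.2) (fun p => Y p.1 p.2)) F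

/-- The Calogero–Moser variety `Ĉ_n = {(X,Y) : rank([X,Y] − i I_n) = 1}`. -/
def Chat (n : ℕ) : Set (Matrix (Fin n) (Fin n) ℂ × Matrix (Fin n) (Fin n) ℂ) :=
  {P | ((P.1 * P.2 - P.2 * P.1) - Complex.I • (1 : Matrix (Fin n) (Fin n) ℂ)).rank = 1}

/-- The traceless Calogero–Moser variety
`Ŝ_n = {(X,Y) : tr X = tr Y = 0, rank([X,Y] − i I_n) = 1}`. -/
def Shat (n : ℕ) : Set (Matrix (Fin n) (Fin n) ℂ × Matrix (Fin n) (Fin n) ℂ) :=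
  {P | Matrix.trace P.1 = 0 ∧ Matrix.trace P.2 = 0 ∧
    ((P.1 * P.2 - P.2 * P.1) - Complex.I • (1 : Matrix (Fin n) (Fin n) ℂ)).rank = 1}

/-- The set `ℱ = {tr A², tr B², tr A³, (tr AB)²}`. -/
noncomputable def calF (n : ℕ) : Set (PolyFun n) :=
  {trAB n 2 0, trAB n 0 2, trAB n 3 0, (trAB n 1 1) ^ 2}

/-- The smallest ℂ-linear subspace of the polynomial functions containing `S`
and closed under the Poisson bracket. -/
inductive LieGen (n : ℕ) (S : Set (PolyFun n)) : PolyFun n → Prop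
  | base {f : PolyFun n} : f ∈ S → LieGen n S f
  | zero : LieGen n S 0
  | add {f g : PolyFun n} : LieGen n S f → LieGen n S g → LieGen n S (f + g)
  | smul (c : ℂ) {f : PolyFun n} : LieGen n S f → LieGen n S (c • f)
  | bracket {f g : PolyFun n} : LieGen n S f → LieGen n S g → LieGen n S (pbracket f g)

/-!
Write `a_m = tr A^m`, `b_m = tr B^m` and `Q = tr AB`. The gradients of `tr (A^p B^q)` in `X`
and `Y` are the traceless parts of `∑ A^i B^q A^(p-1-i)` and `∑ B^i A^p B^(q-1-i)`, so every
bracket `{tr A^p B^q, tr A^r B^s}` is a trace identity. Since `{Q, a_m} = -m a_m`, bracketing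
with `Q² ∈ ℱ` produces `Q a_m`, and bracketing `a_p` with `Q a_m` produces `a_p a_m`: the span
contains the product of any two `a`'s it contains. The element `tr A²B = {tr A³, tr B²} / 6`
raises the degree, `{tr A²B, a_(m+1)} = -(m+1) (a_(m+2) - a_2 a_m / n)`, so all `a_m` with
`m ≥ 2`, and hence their squares, lie in `Lie(ℱ)` by induction. The same works for the `b_m`,
with `tr AB² = -{tr B², tr A²B} / 4` in the role of `tr A²B`.
-/

open Finset

section MatrixDerivation

variable {R A ι : Type*} [CommSemiring R] [CommSemiring A] [Algebra R A] (D : Derivation R A A)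

theorem Derivation.map_matrix_mul [Fintype ι] (M N : Matrix ι ι A) :
    (M * N).map D = M.map D * N + M * N.map D := by
  ext a b
  simp only [map_apply, mul_apply, map_sum, Derivation.leibniz, smul_eq_mul, sum_add_distrib]
  rw [add_comm]
  congr 1
  exact sum_congr rfl fun _ _ => mul_comm _ _

theorem Derivation.map_matrix_one [DecidableEq ι] : (1 : Matrix ι ι A).map D = 0 := by
  ext a b
  by_cases h : a = b <;> simp [one_apply, h]

theorem Derivation.trace_matrix_map [Fintype ι] (M : Matrix ι ι A) :
    D M.trace = (M.map D).trace := by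
  simp [trace, map_sum]

theorem Derivation.trace_map_pow_mul [Fintype ι] [DecidableEq ι] (M N : Matrix ι ι A) :
    ∀ p : ℕ, ((M ^ p).map D * N).trace =
      (M.map D * ∑ i ∈ range p, M ^ i * N * M ^ (p - 1 - i)).trace
  | 0 => by simp [D.map_matrix_one]
  | p + 1 => by
    have hshift : ∑ i ∈ range p, M ^ i * (M * N) * M ^ (p - 1 - i) =
        ∑ i ∈ range p, M ^ (i + 1) * N * M ^ (p + 1 - 1 - (i + 1)) := by
      refine sum_congr rfl fun i _ => ?_
      rw [pow_succ, ← Matrix.mul_assoc, show p + 1 - 1 - (i + 1) = p - 1 - i by omega]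
    rw [pow_succ, D.map_matrix_mul, Matrix.add_mul, trace_add, Matrix.mul_assoc,
      trace_map_pow_mul M (M * N) p, hshift, sum_range_succ', Matrix.mul_add, trace_add,
      Matrix.mul_assoc (M ^ p), trace_mul_comm (M ^ p)]
    simp [Matrix.mul_assoc]

end MatrixDerivation

section Calculus

variable {n : ℕ}

local notation "Mat" => Matrix (Fin n) (Fin n) (PolyFun n)

noncomputable def traceless (W : Mat) : Mat := W - (C ((n : ℂ)⁻¹) * W.trace) • 1

theorem Amat_eq_traceless : Amat n = traceless (Xmat n) := rfl

theorem Bmat_eq_traceless : Bmat n = traceless (Ymat n) := rfl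

theorem trace_traceless_mul (U V : Mat) :
    (traceless U * V).trace = (U * traceless V).trace := by
  simp only [traceless, Matrix.sub_mul, Matrix.mul_sub, trace_sub, smul_mul_assoc,
    mul_smul_comm, Matrix.one_mul, Matrix.mul_one, trace_smul, smul_eq_mul]
  ring

theorem C_inv_mul_natCast [NeZero n] : (C ((n : ℂ)⁻¹) : PolyFun n) * n = 1 := by
  rw [← map_natCast (C : ℂ →+* PolyFun n), ← map_mul, inv_mul_cancel₀ (NeZero.ne _),
    map_one]

theorem trace_traceless [NeZero n] (W : Mat) : (traceless W).trace = 0 := by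
  simp only [traceless, trace_sub, trace_smul, trace_one, Fintype.card_fin, smul_eq_mul]
  linear_combination -W.trace * C_inv_mul_natCast (n := n)

theorem trace_traceless_mul_traceless [NeZero n] (U V : Mat) :
    (traceless U * traceless V).trace =
      (U * V).trace - C ((n : ℂ)⁻¹) * (U.trace * V.trace) := by
  simp only [traceless, Matrix.sub_mul, Matrix.mul_sub, trace_sub, smul_mul_assoc,
    mul_smul_comm, Matrix.one_mul, Matrix.mul_one, trace_smul, trace_one,
    Fintype.card_fin, smul_eq_mul]
  linear_combination (C ((n : ℂ)⁻¹) * U.trace * V.trace) * C_inv_mul_natCast (n := n)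

theorem map_pderiv_traceless (v : (Fin n × Fin n) ⊕ (Fin n × Fin n)) (W : Mat) :
    (traceless W).map (pderiv v) = traceless (W.map (pderiv v)) := by
  ext a b
  by_cases h : a = b <;>
    simp [traceless, one_apply, h, (pderiv v).trace_matrix_map]

theorem map_pderiv_inl_Xmat (j k : Fin n) :
    (Xmat n).map (pderiv (Sum.inl (j, k))) = single j k 1 := by
  ext a b
  by_cases h : j = a ∧ k = b
  · obtain ⟨rfl, rfl⟩ := h
    simp [Xmat]
  · simp [Xmat, pderiv_X, h]

theorem map_pderiv_inr_Xmat (v : Fin n × Fin n) : (Xmat n).map (pderiv (Sum.inr v)) = 0 := by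
  ext a b
  simp [Xmat]

theorem map_pderiv_inl_Ymat (v : Fin n × Fin n) : (Ymat n).map (pderiv (Sum.inl v)) = 0 := by
  ext a b
  simp [Ymat]

theorem map_pderiv_inr_Ymat (j k : Fin n) :
    (Ymat n).map (pderiv (Sum.inr (j, k))) = single j k 1 := by
  ext a b
  by_cases h : j = a ∧ k = b
  · obtain ⟨rfl, rfl⟩ := h
    simp [Ymat]
  · simp [Ymat, pderiv_X, h]

noncomputable def xPartial (n p q : ℕ) : Matrix (Fin n) (Fin n) (PolyFun n) :=
  ∑ i ∈ range p, Amat n ^ i * Bmat n ^ q * Amat n ^ (p - 1 - i)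

noncomputable def yPartial (n p q : ℕ) : Matrix (Fin n) (Fin n) (PolyFun n) :=
  ∑ i ∈ range q, Bmat n ^ i * Amat n ^ p * Bmat n ^ (q - 1 - i)

theorem pderiv_trAB (v : (Fin n × Fin n) ⊕ (Fin n × Fin n)) (p q : ℕ) :
    pderiv v (trAB n p q) = ((Amat n).map (pderiv v) * xPartial n p q).trace +
      ((Bmat n).map (pderiv v) * yPartial n p q).trace := by
  rw [trAB, (pderiv v).trace_matrix_map, (pderiv v).map_matrix_mul, trace_add,
    trace_mul_comm (Amat n ^ p), (pderiv v).trace_map_pow_mul, (pderiv v).trace_map_pow_mul,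
    xPartial, yPartial]

noncomputable def gradX (F : PolyFun n) : Mat := of fun k j => pderiv (Sum.inl (j, k)) F

noncomputable def gradY (F : PolyFun n) : Mat := of fun k j => pderiv (Sum.inr (j, k)) F

theorem gradX_trAB (p q : ℕ) : gradX (trAB n p q) = traceless (xPartial n p q) := by
  ext k j
  simp [gradX, pderiv_trAB, Amat_eq_traceless, Bmat_eq_traceless, map_pderiv_traceless,
    map_pderiv_inl_Xmat, map_pderiv_inl_Ymat, trace_traceless_mul, trace_single_mul]

theorem gradY_trAB (p q : ℕ) : gradY (trAB n p q) = traceless (yPartial n p q) := by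
  ext k j
  simp [gradY, pderiv_trAB, Amat_eq_traceless, Bmat_eq_traceless, map_pderiv_traceless,
    map_pderiv_inr_Xmat, map_pderiv_inr_Ymat, trace_traceless_mul, trace_single_mul]

theorem pbracket_eq_trace (F G : PolyFun n) :
    pbracket F G = (gradX F * gradY G).trace - (gradY F * gradX G).trace := by
  simp only [pbracket, gradX, gradY, trace, Matrix.diag, mul_apply, of_apply, ← sum_sub_distrib]
  rw [sum_comm]

theorem pbracket_comm (F G : PolyFun n) : pbracket G F = -pbracket F G := by
  rw [pbracket_eq_trace, pbracket_eq_trace, trace_mul_comm (gradX G), trace_mul_comm (gradY G)]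
  ring

theorem pbracket_mul_right (F G H : PolyFun n) :
    pbracket F (G * H) = G * pbracket F H + H * pbracket F G := by
  simp only [pbracket, mul_sum, ← sum_add_distrib, Derivation.leibniz, smul_eq_mul]
  refine sum_congr rfl fun _ _ => sum_congr rfl fun _ _ => ?_
  ring

theorem pbracket_mul_left (F G H : PolyFun n) :
    pbracket (F * G) H = F * pbracket G H + G * pbracket F H := by
  rw [pbracket_comm, pbracket_mul_right, pbracket_comm G, pbracket_comm F]
  ring

theorem pbracket_trAB [NeZero n] (p q r s : ℕ) :
    pbracket (trAB n p q) (trAB n r s) =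
      (xPartial n p q * yPartial n r s).trace - (yPartial n p q * xPartial n r s).trace -
        C ((n : ℂ)⁻¹) * ((xPartial n p q).trace * (yPartial n r s).trace -
          (yPartial n p q).trace * (xPartial n r s).trace) := by
  rw [pbracket_eq_trace, gradX_trAB, gradY_trAB, gradX_trAB, gradY_trAB,
    trace_traceless_mul_traceless, trace_traceless_mul_traceless]
  ring

end Calculus

section Brackets

variable {n : ℕ}

@[simp]
theorem xPartial_zero_left (q : ℕ) : xPartial n 0 q = 0 := by
  simp [xPartial]

@[simp]
theorem yPartial_zero_right (p : ℕ) : yPartial n p 0 = 0 := by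
  simp [yPartial]

theorem xPartial_succ_zero (m : ℕ) : xPartial n (m + 1) 0 = (m + 1 : ℂ) • Amat n ^ m := by
  rw [xPartial, sum_congr rfl fun i hi => by
    rw [pow_zero, Matrix.mul_one, ← pow_add, Nat.add_sub_of_le (by grind)]]
  simp [← Nat.cast_smul_eq_nsmul ℂ]

theorem yPartial_zero_succ (m : ℕ) : yPartial n 0 (m + 1) = (m + 1 : ℂ) • Bmat n ^ m := by
  rw [yPartial, sum_congr rfl fun i hi => by
    rw [pow_zero, Matrix.mul_one, ← pow_add, Nat.add_sub_of_le (by grind)]]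
  simp [← Nat.cast_smul_eq_nsmul ℂ]

variable [NeZero n]

theorem trace_Amat : (Amat n).trace = 0 := trace_traceless _

theorem trace_Bmat : (Bmat n).trace = 0 := trace_traceless _

theorem trAB_one_zero : trAB n 1 0 = 0 := by
  simp [trAB, trace_Amat]

theorem trAB_zero_one : trAB n 0 1 = 0 := by
  simp [trAB, trace_Bmat]

theorem pbracket_trAB_zero_right_trAB_zero_right (p m : ℕ) :
    pbracket (trAB n p 0) (trAB n m 0) = 0 := by
  simp [pbracket_trAB]

theorem pbracket_trAB_zero_left_trAB_zero_left (p m : ℕ) :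
    pbracket (trAB n 0 p) (trAB n 0 m) = 0 := by
  simp [pbracket_trAB]

theorem pbracket_trAB_one_one_trAB_succ_zero (m : ℕ) :
    pbracket (trAB n 1 1) (trAB n (m + 1) 0) = (-(m + 1 : ℂ)) • trAB n (m + 1) 0 := by
  rw [pbracket_trAB, xPartial_succ_zero]
  simp [xPartial, yPartial, trace_Amat, trAB, ← pow_succ']
  module

theorem pbracket_trAB_one_one_trAB_zero_succ (m : ℕ) :
    pbracket (trAB n 1 1) (trAB n 0 (m + 1)) = (m + 1 : ℂ) • trAB n 0 (m + 1) := by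
  rw [pbracket_trAB, yPartial_zero_succ]
  simp [xPartial, yPartial, trace_Bmat, trAB, ← pow_succ']

theorem pbracket_trAB_three_zero_trAB_zero_two :
    pbracket (trAB n 3 0) (trAB n 0 2) = (6 : ℂ) • trAB n 2 1 := by
  rw [pbracket_trAB, xPartial_succ_zero, yPartial_zero_succ]
  simp [trace_Bmat, trAB, smul_smul]
  norm_num

theorem pbracket_trAB_zero_two_trAB_two_one :
    pbracket (trAB n 0 2) (trAB n 2 1) = (-4 : ℂ) • trAB n 1 2 := by
  have hBAB : (Bmat n * (Amat n * Bmat n)).trace = (Amat n * Bmat n ^ 2).trace := by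
    rw [trace_mul_comm, Matrix.mul_assoc, sq]
  have hBBA : (Bmat n * (Bmat n * Amat n)).trace = (Amat n * Bmat n ^ 2).trace := by
    rw [← Matrix.mul_assoc, trace_mul_comm, sq]
  rw [pbracket_trAB, yPartial_zero_succ]
  simp [xPartial, yPartial, sum_range_succ, trace_Bmat, trAB, Matrix.mul_add, hBAB, hBBA]
  module

theorem pbracket_trAB_two_one_trAB_succ_zero (m : ℕ) :
    pbracket (trAB n 2 1) (trAB n (m + 1) 0) =
      (-(m + 1 : ℂ)) • (trAB n (m + 2) 0 - (n : ℂ)⁻¹ • (trAB n 2 0 * trAB n m 0)) := by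
  rw [pbracket_trAB, xPartial_succ_zero]
  simp [yPartial, trAB, ← pow_add, smul_eq_C_mul]
  rw [Nat.add_comm 2 m]
  ring

theorem pbracket_trAB_one_two_trAB_zero_succ (m : ℕ) :
    pbracket (trAB n 1 2) (trAB n 0 (m + 1)) =
      (m + 1 : ℂ) • (trAB n 0 (m + 2) - (n : ℂ)⁻¹ • (trAB n 0 2 * trAB n 0 m)) := by
  rw [pbracket_trAB, yPartial_zero_succ]
  simp [xPartial, trAB, ← pow_add, smul_eq_C_mul]
  rw [Nat.add_comm 2 m]
  ring

end Brackets

section LieSpan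

variable {n : ℕ}

def lieSpan (n : ℕ) (S : Set (PolyFun n)) : Submodule ℂ (PolyFun n) where
  carrier := {f | LieGen n S f}
  add_mem' := LieGen.add
  zero_mem' := LieGen.zero
  smul_mem' := LieGen.smul

variable {S : Set (PolyFun n)}

theorem subset_lieSpan {f : PolyFun n} (hf : f ∈ S) : f ∈ lieSpan n S := LieGen.base hf

theorem pbracket_mem_lieSpan {F G : PolyFun n} (hF : F ∈ lieSpan n S) (hG : G ∈ lieSpan n S) :
    pbracket F G ∈ lieSpan n S :=
  LieGen.bracket hF hG

theorem mem_lieSpan_of_pbracket_eq_smul {F G H : PolyFun n} {t : ℂ} (ht : t ≠ 0)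
    (hF : F ∈ lieSpan n S) (hG : G ∈ lieSpan n S) (hFG : pbracket F G = t • H) :
    H ∈ lieSpan n S :=
  ((lieSpan n S).smul_mem_iff ht).mp (hFG ▸ pbracket_mem_lieSpan hF hG)

variable {Q R : PolyFun n} {c : ℕ → PolyFun n} {s t κ : ℂ}

theorem mul_mem_lieSpan_of_ad_eigen (hs : s ≠ 0) (hQ : Q ^ 2 ∈ lieSpan n S)
    (hQc : ∀ m : ℕ, pbracket Q (c (m + 1)) = (s * (m + 1)) • c (m + 1))
    (hcc : ∀ p m, pbracket (c p) (c m) = 0) {p m : ℕ}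
    (hp : c (p + 1) ∈ lieSpan n S) (hm : c (m + 1) ∈ lieSpan n S) :
    c (p + 1) * c (m + 1) ∈ lieSpan n S := by
  have hQm : Q * c (m + 1) ∈ lieSpan n S := by
    refine mem_lieSpan_of_pbracket_eq_smul (t := 2 * (s * (m + 1))) ?_ hQ hm ?_
    · exact mul_ne_zero two_ne_zero (mul_ne_zero hs (Nat.cast_add_one_ne_zero m))
    · rw [sq, pbracket_mul_left, hQc, mul_smul_comm]
      module
  refine mem_lieSpan_of_pbracket_eq_smul (t := -(s * (p + 1))) ?_ hp hQm ?_
  · exact neg_ne_zero.mpr (mul_ne_zero hs (Nat.cast_add_one_ne_zero p))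
  · rw [pbracket_mul_right, hcc, pbracket_comm, hQc, mul_zero, zero_add, mul_neg,
      mul_smul_comm, mul_comm (c (m + 1)), neg_smul]

theorem mem_lieSpan_of_ad_recursion (hs : s ≠ 0) (ht : t ≠ 0)
    (hQ : Q ^ 2 ∈ lieSpan n S) (hR : R ∈ lieSpan n S) (hc1 : c 1 = 0)
    (hc2 : c 2 ∈ lieSpan n S)
    (hQc : ∀ m : ℕ, pbracket Q (c (m + 1)) = (s * (m + 1)) • c (m + 1))
    (hcc : ∀ p m, pbracket (c p) (c m) = 0)
    (hRc : ∀ m : ℕ,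
      pbracket R (c (m + 1)) = (t * (m + 1)) • (c (m + 2) - κ • (c 2 * c m))) :
    ∀ m, c (m + 2) ∈ lieSpan n S := by
  have step (m : ℕ) (h1 : c (m + 1) ∈ lieSpan n S) (h2 : c 2 * c m ∈ lieSpan n S) :
      c (m + 2) ∈ lieSpan n S :=
    (Submodule.sub_mem_iff_left _ (Submodule.smul_mem _ κ h2)).mp <|
      mem_lieSpan_of_pbracket_eq_smul (mul_ne_zero ht (Nat.cast_add_one_ne_zero m)) hR h1 (hRc m)
  refine Nat.twoStepInduction hc2 (step 1 hc2 (by simp [hc1])) fun m hm hm1 => step _ hm1 ?_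
  exact mul_mem_lieSpan_of_ad_eigen (p := 1) hs hQ hQc hcc hc2 hm

end LieSpan

section CalogeroMoser

variable {n : ℕ}

theorem trAB_two_zero_mem_lieSpan : trAB n 2 0 ∈ lieSpan n (calF n) :=
  subset_lieSpan (by simp [calF])

theorem trAB_zero_two_mem_lieSpan : trAB n 0 2 ∈ lieSpan n (calF n) :=
  subset_lieSpan (by simp [calF])

theorem trAB_three_zero_mem_lieSpan : trAB n 3 0 ∈ lieSpan n (calF n) :=
  subset_lieSpan (by simp [calF])

theorem sq_trAB_one_one_mem_lieSpan : trAB n 1 1 ^ 2 ∈ lieSpan n (calF n) :=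
  subset_lieSpan (by simp [calF])

variable [NeZero n]

theorem trAB_two_one_mem_lieSpan : trAB n 2 1 ∈ lieSpan n (calF n) :=
  mem_lieSpan_of_pbracket_eq_smul (by norm_num) trAB_three_zero_mem_lieSpan
    trAB_zero_two_mem_lieSpan pbracket_trAB_three_zero_trAB_zero_two

theorem trAB_one_two_mem_lieSpan : trAB n 1 2 ∈ lieSpan n (calF n) :=
  mem_lieSpan_of_pbracket_eq_smul (by norm_num) trAB_zero_two_mem_lieSpan
    trAB_two_one_mem_lieSpan pbracket_trAB_zero_two_trAB_two_one

theorem sq_trAB_zero_right_mem_lieSpan (m : ℕ) : trAB n (m + 2) 0 ^ 2 ∈ lieSpan n (calF n) := by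
  have hQc (m : ℕ) : pbracket (trAB n 1 1) (trAB n (m + 1) 0) =
      (-1 * (m + 1 : ℂ)) • trAB n (m + 1) 0 := by
    rw [pbracket_trAB_one_one_trAB_succ_zero, neg_one_mul]
  have hA : ∀ m, trAB n (m + 2) 0 ∈ lieSpan n (calF n) :=
    mem_lieSpan_of_ad_recursion (c := fun m => trAB n m 0) (s := -1) (t := -1)
      (by norm_num) (by norm_num) sq_trAB_one_one_mem_lieSpan trAB_two_one_mem_lieSpan
      trAB_one_zero trAB_two_zero_mem_lieSpan hQc pbracket_trAB_zero_right_trAB_zero_right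
      fun m => by rw [pbracket_trAB_two_one_trAB_succ_zero, neg_one_mul]
  rw [sq]
  exact mul_mem_lieSpan_of_ad_eigen (c := fun m => trAB n m 0) (by norm_num)
    sq_trAB_one_one_mem_lieSpan hQc pbracket_trAB_zero_right_trAB_zero_right (hA m) (hA m)

theorem sq_trAB_zero_left_mem_lieSpan (m : ℕ) : trAB n 0 (m + 2) ^ 2 ∈ lieSpan n (calF n) := by
  have hQc (m : ℕ) : pbracket (trAB n 1 1) (trAB n 0 (m + 1)) =
      (1 * (m + 1 : ℂ)) • trAB n 0 (m + 1) := by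
    rw [pbracket_trAB_one_one_trAB_zero_succ, one_mul]
  have hB : ∀ m, trAB n 0 (m + 2) ∈ lieSpan n (calF n) :=
    mem_lieSpan_of_ad_recursion (c := fun m => trAB n 0 m) (s := 1) (t := 1)
      one_ne_zero one_ne_zero sq_trAB_one_one_mem_lieSpan trAB_one_two_mem_lieSpan
      trAB_zero_one trAB_zero_two_mem_lieSpan hQc pbracket_trAB_zero_left_trAB_zero_left
      fun m => by rw [pbracket_trAB_one_two_trAB_zero_succ, one_mul]
  rw [sq]
  exact mul_mem_lieSpan_of_ad_eigen (c := fun m => trAB n 0 m) one_ne_zero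
    sq_trAB_one_one_mem_lieSpan hQc pbracket_trAB_zero_left_trAB_zero_left (hB m) (hB m)

end CalogeroMoser

/-- for all `j, k ≥ 2` there are `g, h ∈ Lie(ℱ)` such that `(tr A^j)²`
agrees with `g` and `(tr B^k)²` agrees with `h` at every point of `Ŝ_n`. -/
theorem stmt_8 (n : ℕ) (hn : 1 ≤ n) (j k : ℕ) (hj : 2 ≤ j) (hk : 2 ≤ k) :
    (∃ g : PolyFun n, LieGen n (calF n) g ∧
      ∀ P ∈ Shat n, evalP P.1 P.2 ((trAB n j 0) ^ 2) = evalP P.1 P.2 g) ∧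
    (∃ h : PolyFun n, LieGen n (calF n) h ∧
      ∀ P ∈ Shat n, evalP P.1 P.2 ((trAB n 0 k) ^ 2) = evalP P.1 P.2 h) := by
  have : NeZero n := ⟨by omega⟩
  obtain ⟨j, rfl⟩ := Nat.exists_eq_add_of_le' hj
  obtain ⟨k, rfl⟩ := Nat.exists_eq_add_of_le' hk
  exact ⟨⟨_, sq_trAB_zero_right_mem_lieSpan j, fun _ _ => rfl⟩,
    ⟨_, sq_trAB_zero_left_mem_lieSpan k, fun _ _ => rfl⟩⟩
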